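/- Let n ≥ 1 and let f₀, f₁, …, f_{k−1} : (Fin n → Bool) → (Fin n → Bool) be functions each of which has a pass-through coordinate, and let f = f_{k−1} ∘ f_{k−2} ∘ ⋯ ∘ f₀. Then there is no x ∈ (Fin n → Bool) such that the 2^n iterates x, f(x), f²(x), …, f^{2^n−1}(x) are pairwise distinct; that is, f is not a 2^n-counter. -/

import Mathlib

/-!
A map `g` with pass-through coordinate `j` commutes with flipping bit `j`. So if `g` is not
surjective, the complement of its range contains a pair `{z, flipAt j z}` and the range has at most
`2^n - 2` points; if `g` is bijective, splitting off coordinate `j` turns it into `id × γ` on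
`Bool × (Bool^(n-1))`, an even permutation. Maps that are even permutations or have at most
`2^n - 2` values are closed under composition, so `f` is one of them. But a `2^n`-counter takes at least
`2^n - 1` values, and if it is a permutation it is a single `2^n`-cycle, which is odd.
-/

/-- `j` is a pass-through coordinate of `f`: `f` copies coordinate `j` through,
and no other output coordinate depends on input coordinate `j`. -/
def PassThrough {n : ℕ} (f : (Fin n → Bool) → (Fin n → Bool)) (j : Fin n) : Prop :=
  (∀ x, f x j = x j) ∧
  ∀ l : Fin n, l ≠ j → ∀ x x' : Fin n → Bool,
    (∀ i : Fin n, i ≠ j → x i = x' i) → f x l = f x' l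

/-- The composition `f_{k-1} ∘ f_{k-2} ∘ ⋯ ∘ f₀` of a finite family of self-maps
(`f 0` is applied first). -/
def compFamily {α : Type*} {k : ℕ} (f : Fin k → α → α) : α → α :=
  (List.ofFn f).foldl (fun acc g => g ∘ acc) id

open Function Set

section FlipAt

variable {ι : Type*} [DecidableEq ι]

def flipAt (j : ι) (x : ι → Bool) : ι → Bool := update x j (!x j)

@[simp] lemma flipAt_apply_self (j : ι) (x : ι → Bool) : flipAt j x j = !x j := update_self _ _ _

lemma flipAt_apply_of_ne {j l : ι} (h : l ≠ j) (x : ι → Bool) : flipAt j x l = x l :=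
  update_of_ne h _ _

@[simp] lemma flipAt_flipAt (j : ι) (x : ι → Bool) : flipAt j (flipAt j x) = x := by
  simp [flipAt]

lemma flipAt_ne_self (j : ι) (x : ι → Bool) : flipAt j x ≠ x :=
  fun h => Bool.not_ne_self (x j) (by simpa using congrFun h j)

end FlipAt

lemma Equiv.Perm.sign_eq_one_of_coe_eq_prodMap {β : Type*} [Fintype β] [DecidableEq β]
    {σ : Equiv.Perm (Bool × β)} {γ : β → β} (hσ : ⇑σ = Prod.map id γ) : Equiv.Perm.sign σ = 1 := by
  have hγ : Bijective γ := Finite.injective_iff_bijective.mp fun y y' h => by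
    simpa using σ.injective (a₁ := (false, y)) (a₂ := (false, y')) (by simp [hσ, h])
  have : σ = Equiv.prodCongrRight fun _ => Equiv.ofBijective γ hγ := by
    ext1 ⟨b, y⟩
    simp [hσ]
  simp [this, Equiv.Perm.sign_prodCongrRight]

lemma compFamily_succ {α : Type*} {k : ℕ} (f : Fin (k + 1) → α → α) :
    compFamily f = f (Fin.last k) ∘ compFamily (fun i => f i.castSucc) := by
  rw [compFamily, List.ofFn_succ', List.concat_eq_append, List.foldl_concat]; rfl

section EvenPermOrSmallRange

variable {α : Type*} [Fintype α] [DecidableEq α] {N : ℕ}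

def EvenPermOrSmallRange (N : ℕ) (g : α → α) : Prop :=
  (∃ e : Equiv.Perm α, ⇑e = g ∧ Equiv.Perm.sign e = 1) ∨ (range g).ncard ≤ N

lemma evenPermOrSmallRange_id : EvenPermOrSmallRange N (id : α → α) :=
  Or.inl ⟨1, rfl, map_one _⟩

lemma EvenPermOrSmallRange.comp {g h : α → α} (hg : EvenPermOrSmallRange N g)
    (hh : EvenPermOrSmallRange N h) : EvenPermOrSmallRange N (g ∘ h) := by
  rcases hg with ⟨e, rfl, he⟩ | hg
  · rcases hh with ⟨e', rfl, he'⟩ | hh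
    · exact Or.inl ⟨e * e', rfl, by rw [map_mul, he, he', mul_one]⟩
    · exact Or.inr ((range_comp e h ▸ ncard_image_le).trans hh)
  · exact Or.inr ((ncard_le_ncard (range_comp_subset_range h g)).trans hg)

lemma EvenPermOrSmallRange.compFamily {k : ℕ} {f : Fin k → α → α}
    (hf : ∀ i, EvenPermOrSmallRange N (f i)) : EvenPermOrSmallRange N (compFamily f) := by
  induction k with
  | zero => exact evenPermOrSmallRange_id
  | succ k ih =>
    rw [compFamily_succ]
    exact (hf _).comp (ih fun i => hf _)

end EvenPermOrSmallRange

namespace PassThrough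

variable {n : ℕ} {g : (Fin n → Bool) → (Fin n → Bool)} {j : Fin n}

lemma apply_flipAt (hg : PassThrough g j) (x : Fin n → Bool) :
    g (flipAt j x) = flipAt j (g x) := by
  funext l
  by_cases hl : l = j
  · subst hl
    simp [hg.1]
  · rw [flipAt_apply_of_ne hl]
    exact hg.2 l hl _ _ fun i hi => flipAt_apply_of_ne hi x

/-- The complement of the range is closed under the fixed-point-free involution `flipAt j`. -/
lemma ncard_range_le_of_not_surjective (hg : PassThrough g j) (hns : ¬ Surjective g) :
    (range g).ncard ≤ 2 ^ n - 2 := by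
  obtain ⟨z, hz⟩ := not_forall.mp hns
  have hflip : flipAt j z ∉ range g := by
    rintro ⟨w, hw⟩
    exact hz ⟨flipAt j w, by rw [hg.apply_flipAt, hw, flipAt_flipAt]⟩
  have hpair : ({z, flipAt j z} : Set _) ⊆ (range g)ᶜ := by
    rintro w (rfl | rfl)
    exacts [hz, hflip]
  have h2 := ncard_le_ncard hpair
  rw [ncard_pair (flipAt_ne_self j z).symm] at h2
  have htotal := ncard_add_ncard_compl (range g)
  rw [show Nat.card (Fin n → Bool) = 2 ^ n by simp] at htotal
  omega

/-- Splitting off coordinate `j`, `g` becomes `id × γ` on `Bool × ({l // l ≠ j} → Bool)`,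
a permutation of even sign. -/
lemma sign_ofBijective (hg : PassThrough g j) (hbij : Bijective g) :
    Equiv.Perm.sign (Equiv.ofBijective g hbij) = 1 := by
  set e := Equiv.funSplitAt j Bool
  rw [← Equiv.Perm.sign_permCongr e]
  refine Equiv.Perm.sign_eq_one_of_coe_eq_prodMap (γ := fun y => (e (g (e.symm (false, y)))).2) ?_
  funext ⟨b, y⟩
  refine Prod.ext ?_ (funext fun l => ?_)
  · simp [e, hg.1]
  · simp only [e, Equiv.funSplitAt_apply, Prod.map_snd]
    exact hg.2 l l.2 _ _ fun i hi => by simp [hi]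

lemma evenPermOrSmallRange (hg : PassThrough g j) : EvenPermOrSmallRange (2 ^ n - 2) g := by
  by_cases hs : Surjective g
  · have hbij := Finite.surjective_iff_bijective.mp hs
    exact Or.inl ⟨Equiv.ofBijective g hbij, rfl, hg.sign_ofBijective hbij⟩
  · exact Or.inr (hg.ncard_range_le_of_not_surjective hs)

end PassThrough

section Trace

variable {α : Type*}

lemma compl_range_subset_of_injective_iterate [Finite α] {g : α → α} {x : α}
    (h : Injective fun i : Fin (Nat.card α) => g^[i] x) : (range g)ᶜ ⊆ {x} := by
  intro y hy
  obtain ⟨⟨_ | i, _⟩, hi⟩ := (h.bijective_of_nat_card_le (by simp)).2 y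
  · exact hi.symm
  · exact absurd ⟨g^[i] x, (iterate_succ_apply' g i x).symm.trans hi⟩ hy

/-- A permutation whose orbit through `x` exhausts `α` is a cycle with full support. -/
lemma Equiv.Perm.sign_of_injective_iterate [Fintype α] [DecidableEq α] {e : Equiv.Perm α}
    {x : α} (hα : 2 ≤ Nat.card α) (h : Injective fun i : Fin (Nat.card α) => e^[i] x) :
    Equiv.Perm.sign e = -(-1) ^ Nat.card α := by
  have hsame : ∀ y, e.SameCycle x y := fun y => by
    obtain ⟨i, rfl⟩ := (h.bijective_of_nat_card_le (by simp)).2 y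
    exact Equiv.Perm.sameCycle_pow_right.mpr (Equiv.Perm.SameCycle.refl e x)
  have hx : e x ≠ x := fun hx =>
    absurd (@h ⟨1, hα⟩ ⟨0, by omega⟩ (by simpa using hx)) (by simp)
  have hsupp : e.support = Finset.univ := Finset.eq_univ_of_forall fun y =>
    (hsame y).mem_support_iff.mp (Equiv.Perm.mem_support.mpr hx)
  rw [Equiv.Perm.IsCycle.sign ⟨x, hx, fun y _ => hsame y⟩, hsupp, Finset.card_univ,
    Nat.card_eq_fintype_card]

end Trace

theorem no_maximal_counter_of_passThrough {n : ℕ} (hn : 1 ≤ n) {k : ℕ}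
    (f : Fin k → (Fin n → Bool) → (Fin n → Bool))
    (hpass : ∀ i : Fin k, ∃ j : Fin n, PassThrough (f i) j) :
    ¬ ∃ x : Fin n → Bool,
      Function.Injective (fun i : Fin (2 ^ n) => (compFamily f)^[i] x) := by
  rintro ⟨x, htrace⟩
  have hcard : Nat.card (Fin n → Bool) = 2 ^ n := by simp
  have htwo : 2 ≤ 2 ^ n := by simpa using Nat.pow_le_pow_right two_pos hn
  rw [← hcard] at htrace
  rcases EvenPermOrSmallRange.compFamily fun i => (hpass i).elim fun _ hj =>
      hj.evenPermOrSmallRange with ⟨e, he, hsign⟩ | hsmall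
  · rw [← he] at htrace
    have hodd := Equiv.Perm.sign_of_injective_iterate (hcard ▸ htwo) htrace
    rw [hsign, hcard, (Nat.even_pow.mpr ⟨even_two, by omega⟩).neg_one_pow] at hodd
    exact absurd hodd (by decide)
  · have hcompl := ncard_le_ncard (compl_range_subset_of_injective_iterate htrace)
    have htotal := ncard_add_ncard_compl (range (compFamily f))
    rw [ncard_singleton] at hcompl
    omega
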